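/- arXiv:1211.1595 — 7 statements merged into one kernel-verified Lean document; each statement's English description precedes it below -/
import Mathlib

section
/- For every μ > 0, the maximum over x ∈ [0,1] of g(x) := -2x/μ + 1/μ + (e^{2μx} - e^{2μ(1-x)})/(μ(e^{2μ} - 1)) is attained at x* = (1/(2μ))(log((sinh μ / μ)(1 - √(1 - μ²/sinh²μ))) + μ), and its value equals c*(μ) := -(1/μ²)[log((sinh μ / μ)(1 - √(1 - μ²/sinh²μ))) + √(1 - μ²/sinh²μ)]. -/
/-!
Substituting `y = μ (2x - 1) ∈ [-μ, μ]` gives `μ² g(x) = μ sinh y / sinh μ - y`. For `y ≥ 0` convexity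
of `sinh` keeps it below its chord through `0` and `μ`, so this is `≤ 0`. For `y ≤ 0` it is concave,
with critical point `y = -t`, `t = arcosh (sinh μ / μ)`, and the tangent line of `sinh` at `-t` bounds
it by `t - tanh t ≥ 0`. The closed forms of the statement are `log (cosh t - sinh t) = -t` and
`√(1 - 1 / cosh² t) = tanh t`.
-/

open Real Set

namespace Real

lemma convexOn_sinh_Ici : ConvexOn ℝ (Ici 0) sinh :=
  convexOn_of_hasDerivWithinAt2_nonneg (convex_Ici 0) continuous_sinh.continuousOn
    (fun x _ ↦ (hasDerivAt_sinh x).hasDerivWithinAt)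
    (fun x _ ↦ (hasDerivAt_cosh x).hasDerivWithinAt)
    (fun _ hx ↦ sinh_nonneg_iff.mpr (interior_subset hx))

lemma sinh_add_cosh_mul_sub_le_sinh {a b : ℝ} (ha : 0 ≤ a) (hb : 0 ≤ b) :
    sinh a + cosh a * (b - a) ≤ sinh b := by
  rcases lt_trichotomy a b with hab | rfl | hba
  · have h := convexOn_sinh_Ici.le_slope_of_hasDerivAt ha hb hab (hasDerivAt_sinh a)
    rw [slope_def_field, le_div_iff₀ (sub_pos.mpr hab)] at h
    linarith
  · simp
  · have h := convexOn_sinh_Ici.slope_le_of_hasDerivAt hb ha hba (hasDerivAt_sinh a)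
    rw [slope_def_field, div_le_iff₀ (sub_pos.mpr hba)] at h
    linarith

lemma sinh_le_sinh_add_cosh_mul_sub {a b : ℝ} (ha : a ≤ 0) (hb : b ≤ 0) :
    sinh b ≤ sinh a + cosh a * (b - a) := by
  have h := sinh_add_cosh_mul_sub_le_sinh (neg_nonneg.mpr ha) (neg_nonneg.mpr hb)
  rw [sinh_neg, sinh_neg, cosh_neg] at h
  linarith

lemma sinh_le_mul_cosh {x : ℝ} (hx : 0 ≤ x) : sinh x ≤ x * cosh x := by
  have h := sinh_add_cosh_mul_sub_le_sinh hx le_rfl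
  rw [sinh_zero] at h
  linarith

lemma tanh_le_self {x : ℝ} (hx : 0 ≤ x) : tanh x ≤ x := by
  rw [tanh_eq_sinh_div_cosh, div_le_iff₀ (cosh_pos x)]
  exact sinh_le_mul_cosh hx

lemma mul_sinh_le_mul_sinh {x y : ℝ} (hx : 0 ≤ x) (hxy : x ≤ y) : y * sinh x ≤ x * sinh y := by
  rcases hx.eq_or_lt with rfl | hx
  · simp
  have h := convexOn_sinh_Ici.secant_mono (a := 0) self_mem_Ici hx.le (hx.le.trans hxy) hx.ne'
    (hx.trans_le hxy).ne' hxy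
  rw [sinh_zero, sub_zero, sub_zero, sub_zero, sub_zero,
    div_le_div_iff₀ hx (hx.trans_le hxy)] at h
  linarith

lemma sinh_div_sinh (a b : ℝ) :
    sinh a / sinh b = (exp (a + b) - exp (b - a)) / (exp (2 * b) - 1) := by
  have hb : 2 * exp b ≠ 0 := by positivity
  rw [← mul_div_mul_left (sinh a) (sinh b) hb, sinh_eq, sinh_eq, exp_add, exp_sub, exp_neg,
    exp_neg, show 2 * b = b + b by ring, exp_add]
  field_simp

lemma sqrt_one_sub_inv_sq_eq_tanh_arcosh {c : ℝ} (hc : 1 ≤ c) :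
    √(1 - (c ^ 2)⁻¹) = tanh (arcosh c) := by
  have hc0 : 0 < c := one_pos.trans_le hc
  rw [tanh_arcosh hc, show 1 - (c ^ 2)⁻¹ = (c ^ 2 - 1) / c ^ 2 by field_simp,
    sqrt_div' _ (sq_nonneg c), sqrt_sq hc0.le]

lemma log_mul_one_sub_tanh_arcosh {c : ℝ} (hc : 1 ≤ c) :
    log (c * (1 - tanh (arcosh c))) = -arcosh c := by
  have h := cosh_arcosh hc
  set t := arcosh c
  rw [← h, tanh_eq_sinh_div_cosh, mul_one_sub, mul_div_cancel₀ _ (cosh_pos t).ne', cosh_sub_sinh,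
    log_exp]

end Real

lemma exp_sub_exp_div_mul_exp_sub_one (μ x : ℝ) :
    (exp (2 * μ * x) - exp (2 * μ * (1 - x))) / (μ * (exp (2 * μ) - 1)) =
      sinh (μ * (2 * x - 1)) / sinh μ / μ := by
  rw [sinh_div_sinh, mul_comm μ, ← div_div]
  ring_nf

lemma one_lt_sinh_div_self {μ : ℝ} (hμ : 0 < μ) : 1 < sinh μ / μ :=
  (one_lt_div hμ).mpr (self_lt_sinh_iff.mpr hμ)

lemma arcosh_sinh_div_self_le {μ : ℝ} (hμ : 0 < μ) : arcosh (sinh μ / μ) ≤ μ :=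
  calc arcosh (sinh μ / μ) ≤ arcosh (cosh μ) := by
        rw [arcosh_le_arcosh (one_pos.trans (one_lt_sinh_div_self hμ)) (cosh_pos μ),
          div_le_iff₀ hμ, mul_comm]
        exact sinh_le_mul_cosh hμ.le
    _ = μ := arcosh_cosh hμ.le

lemma mul_sinh_div_sinh_sub_le {μ y : ℝ} (hμ : 0 < μ) (hy : y ≤ μ) :
    μ * sinh y / sinh μ - y ≤ arcosh (sinh μ / μ) - tanh (arcosh (sinh μ / μ)) := by
  have hc := one_lt_sinh_div_self hμ
  have hs : 0 < sinh μ := sinh_pos_iff.mpr hμ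
  have hcosh := cosh_arcosh hc.le
  set t := arcosh (sinh μ / μ)
  have ht : 0 ≤ t := arcosh_nonneg hc.le
  rcases le_total y 0 with hy0 | hy0
  · -- the tangent line of `sinh` at `-t` has slope `sinh μ / μ`
    have h := sinh_le_sinh_add_cosh_mul_sub (neg_nonpos.mpr ht) hy0
    rw [sinh_neg, cosh_neg, hcosh] at h
    rw [tanh_eq_sinh_div_cosh, hcosh]
    field_simp
    field_simp at h
    linarith
  · have h : μ * sinh y / sinh μ ≤ y := by
      rw [div_le_iff₀ hs]
      linarith [mul_sinh_le_mul_sinh hy0 hy]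
    linarith [tanh_le_self ht]

theorem stmt_1 (μ : ℝ) (hμ : 0 < μ)
    (g : ℝ → ℝ)
    (hg : ∀ x, g x = -2 * x / μ + 1 / μ +
      (Real.exp (2 * μ * x) - Real.exp (2 * μ * (1 - x))) / (μ * (Real.exp (2 * μ) - 1)))
    (xstar : ℝ)
    (hx : xstar = (1 / (2 * μ)) *
      (Real.log ((Real.sinh μ / μ) * (1 - Real.sqrt (1 - μ ^ 2 / Real.sinh μ ^ 2))) + μ))
    (cstar : ℝ)
    (hc : cstar = -(1 / μ ^ 2) *
      (Real.log ((Real.sinh μ / μ) * (1 - Real.sqrt (1 - μ ^ 2 / Real.sinh μ ^ 2)))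
        + Real.sqrt (1 - μ ^ 2 / Real.sinh μ ^ 2))) :
    xstar ∈ Set.Icc (0 : ℝ) 1 ∧ IsMaxOn g (Set.Icc (0 : ℝ) 1) xstar ∧ g xstar = cstar := by
  have hsinh := one_lt_sinh_div_self hμ
  rw [show μ ^ 2 / sinh μ ^ 2 = ((sinh μ / μ) ^ 2)⁻¹ by rw [div_pow, inv_div],
    sqrt_one_sub_inv_sq_eq_tanh_arcosh hsinh.le,
    log_mul_one_sub_tanh_arcosh hsinh.le] at hx hc
  have hg' : ∀ x, g x = (μ * sinh (μ * (2 * x - 1)) / sinh μ - μ * (2 * x - 1)) / μ ^ 2 := by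
    intro x
    rw [hg, exp_sub_exp_div_mul_exp_sub_one]
    field_simp
    ring
  set t := arcosh (sinh μ / μ)
  have hxstar : μ * (2 * xstar - 1) = -t := by
    rw [hx]
    field_simp
    ring
  have hgx : g xstar = cstar := by
    rw [hg', hxstar, hc, sinh_neg, tanh_eq_sinh_div_cosh, cosh_arcosh hsinh.le]
    field_simp
    ring
  have ht : 0 ≤ t := arcosh_nonneg hsinh.le
  have htμ : t ≤ μ := arcosh_sinh_div_self_le hμ
  refine ⟨⟨?_, ?_⟩, fun x hxI ↦ ?_, hgx⟩
  · rw [hx]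
    exact mul_nonneg (by positivity) (by linarith)
  · rw [hx, one_div_mul_eq_div, div_le_one (by positivity)]
    linarith
  · show g x ≤ g xstar
    rw [hgx, hc, hg', show -(1 / μ ^ 2) * (-t + tanh t) = (t - tanh t) / μ ^ 2 by ring]
    gcongr ?_ / _
    exact mul_sinh_div_sinh_sub_le hμ (by nlinarith [hxI.2])
end

section
/- For every μ > 0, the critical cost c*(μ) := -(1/μ²)[log((sinh μ / μ)(1 - √(1 - μ²/sinh²μ))) + √(1 - μ²/sinh²μ)] is strictly positive. -/
lemma sinh_lt_mul_cosh (x : ℝ) (hx : 0 < x) : Real.sinh x < x * Real.cosh x := by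
  have h : StrictMonoOn (fun y => y * Real.cosh y - Real.sinh y) (Set.Ici 0) := by
    apply strictMonoOn_of_deriv_pos (convex_Ici _)
    · exact ((continuous_id.mul Real.continuous_cosh).sub Real.continuous_sinh).continuousOn
    · intro y hy
      rw [interior_Ici, Set.mem_Ioi] at hy
      have hd : HasDerivAt (fun y : ℝ => y * Real.cosh y - Real.sinh y)
          (1 * Real.cosh y + y * Real.sinh y - Real.cosh y) y := by
        exact ((hasDerivAt_id y).mul (Real.hasDerivAt_cosh y)).sub (Real.hasDerivAt_sinh y)
      rw [hd.deriv]
      have := Real.sinh_pos_iff.2 hy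
      nlinarith
  have := h (Set.self_mem_Ici) (Set.mem_Ici.2 hx.le) hx
  simp at this
  linarith

theorem stmt_2 (μ : ℝ) (hμ : 0 < μ) :
    0 < -(1 / μ ^ 2) *
      (Real.log ((Real.sinh μ / μ) * (1 - Real.sqrt (1 - μ ^ 2 / Real.sinh μ ^ 2)))
        + Real.sqrt (1 - μ ^ 2 / Real.sinh μ ^ 2)) := by
  have hsinh : μ < Real.sinh μ := Real.self_lt_sinh_iff.2 hμ
  have hsinh0 : 0 < Real.sinh μ := hμ.trans hsinh
  set r : ℝ := μ / Real.sinh μ with hrdef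
  have hr0 : 0 < r := div_pos hμ hsinh0
  have hr1 : r < 1 := (div_lt_one hsinh0).2 hsinh
  have harg : μ ^ 2 / Real.sinh μ ^ 2 = r ^ 2 := by
    rw [hrdef, div_pow]
  rw [harg]
  set s : ℝ := Real.sqrt (1 - r ^ 2) with hsdef
  have hr2 : r ^ 2 < 1 := by nlinarith
  have hs2 : s ^ 2 = 1 - r ^ 2 := Real.sq_sqrt (by nlinarith)
  have hs0 : 0 < s := Real.sqrt_pos.2 (by nlinarith)
  have hs1 : s < 1 := by nlinarith [hs2]
  -- key: sinh s < s cosh s, expressed via exp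
  have hkey := sinh_lt_mul_cosh s hs0
  rw [Real.sinh_eq, Real.cosh_eq] at hkey
  set E : ℝ := Real.exp s with hE
  have hE0 : 0 < E := Real.exp_pos s
  have hEneg : Real.exp (-s) = 1 / E := by rw [Real.exp_neg]; exact inv_eq_one_div E
  -- show 1 - s < r * exp (-s)
  have hmain : 1 - s < r * Real.exp (-s) := by
    apply lt_of_pow_lt_pow_left₀ 2 (by positivity)
    rw [mul_pow, hEneg]
    have hr2s : r ^ 2 = 1 - s ^ 2 := by linarith
    rw [hr2s]
    have h1 : (1 - s) * E < (1 + s) * (1 / E) := by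
      nlinarith [hkey, hE0, hEneg]
    have h2 : (1 - s) * E ^ 2 < 1 + s := by
      have h3 := mul_lt_mul_of_pos_right h1 hE0
      have : (1 + s) * (1 / E) * E = 1 + s := by field_simp
      nlinarith [h3]
    have h4 : (1 - s) * ((1 - s) * E ^ 2) < (1 - s) * (1 + s) :=
      mul_lt_mul_of_pos_left h2 (by linarith)
    have hEE : (0:ℝ) < E ^ 2 := by positivity
    rw [div_pow, one_pow, mul_one_div, lt_div_iff₀ hEE]
    nlinarith [h4]
  -- the log term
  have hX0 : 0 < (Real.sinh μ / μ) * (1 - s) := by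
    apply mul_pos (div_pos hsinh0 hμ) (by linarith)
  have hlog : Real.log ((Real.sinh μ / μ) * (1 - s)) < -s := by
    rw [Real.log_lt_iff_lt_exp hX0]
    have : Real.sinh μ / μ = 1 / r := by
      rw [hrdef, one_div_div]
    rw [this]
    rw [div_mul_eq_mul_div, one_mul, div_lt_iff₀ hr0]
    calc 1 - s < r * Real.exp (-s) := hmain
      _ = Real.exp (-s) * r := mul_comm _ _
  have hA : Real.log ((Real.sinh μ / μ) * (1 - s)) + s < 0 := by linarith
  have hc : -(1 / μ ^ 2) < 0 := by
    have : (0:ℝ) < 1 / μ ^ 2 := by positivity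
    linarith
  exact mul_pos_of_neg_of_neg hc hA
end

section
/- For every μ > 0, the number t* := -c*(μ)μ² - √(1 - μ²/sinh²μ) satisfies h_{c*}(t*) = 0, where h_c(t) = e^{2t}(t + cμ² - 1) + t + cμ² + 1 and c*(μ) = -(1/μ²)[log((sinh μ / μ)(1 - √(1 - μ²/sinh²μ))) + √(1 - μ²/sinh²μ)]. -/
/-!
Put `q = μ / sinh μ ∈ (0, 1)`, `S = √(1 - q²)` and `L = q⁻¹ (1 - S)`, so that `t* = log L` and
`t* + c* μ² = -S`. Then `h_{c*}(t*) = 1 - S - L² (1 + S)`, and this vanishes because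
`L² (1 + S) = q⁻² (1 - S) (1 - S²) = 1 - S`.
-/

open Real

lemma exp_two_mul_mul_sub_one_add_eq_zero {t a s : ℝ} (hta : t + a = -s)
    (hts : exp (2 * t) * (1 + s) = 1 - s) :
    exp (2 * t) * (t + a - 1) + t + a + 1 = 0 := by
  linear_combination (exp (2 * t) + 1) * hta - hts

lemma inv_mul_one_sub_sqrt_one_sub_sq_sq_mul {q : ℝ} (hq : q ≠ 0) (hq1 : q ^ 2 ≤ 1) :
    (q⁻¹ * (1 - √(1 - q ^ 2))) ^ 2 * (1 + √(1 - q ^ 2)) = 1 - √(1 - q ^ 2) := by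
  have hS : √(1 - q ^ 2) ^ 2 = 1 - q ^ 2 := sq_sqrt (by linarith)
  field_simp
  linear_combination (√(1 - q ^ 2) - 1) * hS

lemma inv_mul_one_sub_sqrt_one_sub_sq_pos {q : ℝ} (hq : 0 < q) :
    0 < q⁻¹ * (1 - √(1 - q ^ 2)) := by
  have hS : √(1 - q ^ 2) < 1 := (sqrt_lt' one_pos).mpr (by nlinarith)
  exact mul_pos (inv_pos.mpr hq) (by linarith)

theorem stmt_6 (μ : ℝ) (hμ : 0 < μ)
    (cstar tstar : ℝ)
    (hcs : cstar = -(1 / μ ^ 2) *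
      (Real.log ((Real.sinh μ / μ) * (1 - Real.sqrt (1 - μ ^ 2 / Real.sinh μ ^ 2)))
        + Real.sqrt (1 - μ ^ 2 / Real.sinh μ ^ 2)))
    (hts : tstar = -cstar * μ ^ 2 - Real.sqrt (1 - μ ^ 2 / Real.sinh μ ^ 2)) :
    Real.exp (2 * tstar) * (tstar + cstar * μ ^ 2 - 1) + tstar + cstar * μ ^ 2 + 1 = 0 := by
  have hsinh : μ < sinh μ := self_lt_sinh_iff.mpr hμ
  have hq : 0 < μ / sinh μ := div_pos hμ (hμ.trans hsinh)
  have hq1 : μ / sinh μ ≤ 1 := (div_le_one (hμ.trans hsinh)).mpr hsinh.le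
  set q := μ / sinh μ
  have hq2 : μ ^ 2 / sinh μ ^ 2 = q ^ 2 := (div_pow μ (sinh μ) 2).symm
  have hqinv : sinh μ / μ = q⁻¹ := (inv_div μ (sinh μ)).symm
  rw [hq2, hqinv] at hcs
  rw [hq2] at hts
  set L := q⁻¹ * (1 - √(1 - q ^ 2))
  have hcμ : cstar * μ ^ 2 = -(log L + √(1 - q ^ 2)) := by
    rw [hcs]
    field_simp
  have htL : tstar = log L := by linarith
  refine exp_two_mul_mul_sub_one_add_eq_zero (s := √(1 - q ^ 2)) (by linarith) ?_
  rw [htL, two_mul, exp_add, exp_log (inv_mul_one_sub_sqrt_one_sub_sq_pos hq), ← sq]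
  exact inv_mul_one_sub_sqrt_one_sub_sq_sq_mul hq.ne' (pow_le_one₀ hq.le hq1)
end

section
/- Fix μ > 0 and 0 < c < c*(μ), and let t_c ∈ ]-μ, 0[ satisfy e^{2t_c}(t_c + cμ² - 1) + t_c + cμ² + 1 = 0. Set α_c = -e^{-μ}/(2μ² cosh t_c) and define h̃_c(s) = μ²α_c e^{2s} + (1 - 2μ²α_c) e^s - s + μ²α_c - cμ² - 1. Then h̃_c(t_c + μ) = -μ + sinh(μ)/cosh(t_c). -/
/-!
Substituting `u = e^t` into the equation defining `t_c` gives `t_c + cμ² = tanh t_c`. With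
`μ²α_c = -e^{-μ}/(2 cosh t_c)`, clearing the denominator `2 cosh t_c = e^{t_c} + e^{-t_c}` in
`h̃_c(t_c + μ)` and using this relation, everything cancels except `e^μ - e^{-μ} - 2μ cosh t_c`.
-/

open Real

/-- The paper's `h̃_c`, with `a = μ²α_c` and `k = cμ²`. -/
noncomputable def tildeH (a k s : ℝ) : ℝ :=
  a * exp (2 * s) + (1 - 2 * a) * exp s - s + a - k - 1

theorem eq_tanh_of_exp_two_mul_mul_sub_one_add_add_one_eq_zero {t s : ℝ}
    (h : exp (2 * t) * (s - 1) + s + 1 = 0) : s = tanh t := by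
  rw [tanh_eq, eq_div_iff (by positivity)]
  rw [two_mul, exp_add] at h
  rw [exp_neg]
  field_simp
  linear_combination h

theorem tildeH_add_eq {t μ k : ℝ} (hk : t + k = tanh t) :
    tildeH (-exp (-μ) / (2 * cosh t)) k (t + μ) = -μ + sinh μ / cosh t := by
  obtain rfl : k = tanh t - t := by linarith
  have h2 : exp (2 * (t + μ)) = exp t * exp t * exp μ * exp μ := by
    rw [show 2 * (t + μ) = t + t + (μ + μ) by ring, exp_add, exp_add, exp_add]
    ring
  rw [tildeH, tanh_eq_sinh_div_cosh, h2, exp_add, cosh_eq, sinh_eq, sinh_eq, exp_neg, exp_neg]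
  field_simp
  ring

theorem stmt_11_general (μ c t α : ℝ) (hμ : 0 < μ)
    (hteq : Real.exp (2 * t) * (t + c * μ ^ 2 - 1) + t + c * μ ^ 2 + 1 = 0)
    (hα : α = -Real.exp (-μ) / (2 * μ ^ 2 * Real.cosh t))
    (htilde : ℝ → ℝ)
    (hht : ∀ s, htilde s = μ ^ 2 * α * Real.exp (2 * s) + (1 - 2 * μ ^ 2 * α) * Real.exp s
      - s + μ ^ 2 * α - c * μ ^ 2 - 1) :
    htilde (t + μ) = -μ + Real.sinh μ / Real.cosh t := by
  have hμα : μ ^ 2 * α = -exp (-μ) / (2 * cosh t) := by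
    rw [hα]
    field_simp
  have hk : t + c * μ ^ 2 = tanh t :=
    eq_tanh_of_exp_two_mul_mul_sub_one_add_add_one_eq_zero (by linear_combination hteq)
  calc htilde (t + μ) = tildeH (μ ^ 2 * α) (c * μ ^ 2) (t + μ) := by rw [hht, tildeH]; ring
    _ = -μ + sinh μ / cosh t := by rw [hμα]; exact tildeH_add_eq hk

theorem stmt_11 (μ c cstar t α : ℝ) (hμ : 0 < μ)
    (hcs : cstar = -(1 / μ ^ 2) *
      (Real.log ((Real.sinh μ / μ) * (1 - Real.sqrt (1 - μ ^ 2 / Real.sinh μ ^ 2)))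
        + Real.sqrt (1 - μ ^ 2 / Real.sinh μ ^ 2)))
    (hc : 0 < c) (hcc : c < cstar)
    (ht : t ∈ Set.Ioo (-μ) 0)
    (hteq : Real.exp (2 * t) * (t + c * μ ^ 2 - 1) + t + c * μ ^ 2 + 1 = 0)
    (hα : α = -Real.exp (-μ) / (2 * μ ^ 2 * Real.cosh t))
    (htilde : ℝ → ℝ)
    (hht : ∀ s, htilde s = μ ^ 2 * α * Real.exp (2 * s) + (1 - 2 * μ ^ 2 * α) * Real.exp s
      - s + μ ^ 2 * α - c * μ ^ 2 - 1) :
    htilde (t + μ) = -μ + Real.sinh μ / Real.cosh t :=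
  stmt_11_general μ c t α hμ hteq hα htilde hht
end

section
/- Fix μ > 0 and 0 < c < c*(μ). Let t_{c*} = log((sinh μ / μ)(1 - √(1 - μ²/sinh²μ))) and let t_c be the unique zero of h_c(t) = e^{2t}(t + cμ² - 1) + t + cμ² + 1. Then t_{c*} < t_c < 0; equivalently, the free boundary b_c = (t_c + μ)/(2μ) satisfies b_{c*} < b_c < 1/2, where b_{c*} = (t_{c*} + μ)/(2μ). -/
/-!
Writing `r = √(1 - μ² / sinh² μ)` and `x = (sinh μ / μ)(1 - r)`, one has `x²(1 + r) = 1 - r`, so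
`0 < x < 1`, `t_{c*} = log x < 0`, and `(1 + r) h_c(log x) = 2 (log x + c μ² + r)`, which is negative
exactly when `c < c*`. Since `h_c(0) = 2 c μ² > 0`, the intermediate value theorem puts a zero of `h_c`
strictly between `t_{c*}` and `0`, and by uniqueness it is `t_c`.
-/

open Real Set

section SqrtOneSubSqDivSq

variable {μ s : ℝ}

lemma sqrt_one_sub_sq_div_sq_pos (hμ : 0 < μ) (hμs : μ < s) : 0 < √(1 - μ ^ 2 / s ^ 2) := by
  apply Real.sqrt_pos.mpr
  rw [sub_pos, div_lt_one (by nlinarith)]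
  nlinarith

lemma sqrt_one_sub_sq_div_sq_lt_one (hμ : μ ≠ 0) (hs : s ≠ 0) : √(1 - μ ^ 2 / s ^ 2) < 1 := by
  rw [Real.sqrt_lt' one_pos]
  have : 0 < μ ^ 2 / s ^ 2 := by positivity
  linarith

lemma sq_mul_one_add_sqrt_one_sub_sq_div_sq (hμ : μ ≠ 0) (hμs : μ ^ 2 ≤ s ^ 2) :
    (s / μ * (1 - √(1 - μ ^ 2 / s ^ 2))) ^ 2 * (1 + √(1 - μ ^ 2 / s ^ 2))
      = 1 - √(1 - μ ^ 2 / s ^ 2) := by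
  have hs : s ≠ 0 := by rintro rfl; exact hμ (by simpa using hμs)
  have hr : √(1 - μ ^ 2 / s ^ 2) ^ 2 = 1 - μ ^ 2 / s ^ 2 :=
    Real.sq_sqrt (by rw [sub_nonneg, div_le_one (by positivity)]; exact hμs)
  set r := √(1 - μ ^ 2 / s ^ 2)
  have hs2 : s ^ 2 * (1 - r ^ 2) = μ ^ 2 := by rw [hr]; field_simp; ring
  calc (s / μ * (1 - r)) ^ 2 * (1 + r) = s ^ 2 * (1 - r ^ 2) * (1 - r) / μ ^ 2 := by
        field_simp; ring
    _ = 1 - r := by rw [hs2]; field_simp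

end SqrtOneSubSqDivSq

/-- The paper's `h_c(t)` is `freeBoundaryFun (c * μ ^ 2) t`. -/
noncomputable def freeBoundaryFun (a t : ℝ) : ℝ := exp (2 * t) * (t + a - 1) + t + a + 1

lemma freeBoundaryFun_zero (a : ℝ) : freeBoundaryFun a 0 = 2 * a := by
  simp only [freeBoundaryFun, mul_zero, exp_zero]
  ring

lemma continuous_freeBoundaryFun (a : ℝ) : Continuous (freeBoundaryFun a) := by
  unfold freeBoundaryFun
  fun_prop

lemma one_add_mul_freeBoundaryFun_log {a r x : ℝ} (hx : 0 < x) (hxr : x ^ 2 * (1 + r) = 1 - r) :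
    (1 + r) * freeBoundaryFun a (log x) = 2 * (log x + a + r) := by
  have hexp : exp (2 * log x) = x ^ 2 := by rw [mul_comm, exp_mul, exp_log hx, rpow_two]
  calc (1 + r) * freeBoundaryFun a (log x)
        = x ^ 2 * (1 + r) * (log x + a - 1) + (1 + r) * (log x + a + 1) := by
          rw [freeBoundaryFun, hexp]; ring
    _ = 2 * (log x + a + r) := by rw [hxr]; ring

lemma exists_freeBoundaryFun_eq_zero_mem_Ioo {a t : ℝ} (ha : 0 < a) (ht : t ≤ 0)
    (hneg : freeBoundaryFun a t < 0) : ∃ s ∈ Ioo t 0, freeBoundaryFun a s = 0 :=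
  intermediate_value_Ioo ht (continuous_freeBoundaryFun a).continuousOn
    ⟨hneg, by rw [freeBoundaryFun_zero]; positivity⟩

theorem stmt_13_general (μ c cstar : ℝ) (hμ : 0 < μ)
    (hcs : cstar = -(1 / μ ^ 2) *
      (Real.log ((Real.sinh μ / μ) * (1 - Real.sqrt (1 - μ ^ 2 / Real.sinh μ ^ 2)))
        + Real.sqrt (1 - μ ^ 2 / Real.sinh μ ^ 2)))
    (hc : 0 < c) (hcc : c < cstar)
    (tcstar : ℝ)
    (htcs : tcstar = Real.log ((Real.sinh μ / μ) * (1 - Real.sqrt (1 - μ ^ 2 / Real.sinh μ ^ 2))))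
    (tc : ℝ)
    (huniq : ∀ s : ℝ, Real.exp (2 * s) * (s + c * μ ^ 2 - 1) + s + c * μ ^ 2 + 1 = 0 → s = tc) :
    (tcstar < tc ∧ tc < 0) ∧
    ((tcstar + μ) / (2 * μ) < (tc + μ) / (2 * μ) ∧ (tc + μ) / (2 * μ) < 1 / 2) := by
  have hμs : μ < sinh μ := self_lt_sinh_iff.mpr hμ
  have hr0 := sqrt_one_sub_sq_div_sq_pos hμ hμs
  have hr1 := sqrt_one_sub_sq_div_sq_lt_one hμ.ne' (hμ.trans hμs).ne'
  have hxr := sq_mul_one_add_sqrt_one_sub_sq_div_sq (s := sinh μ) hμ.ne' (by nlinarith)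
  set r := √(1 - μ ^ 2 / sinh μ ^ 2)
  set x := sinh μ / μ * (1 - r)
  have hx0 : 0 < x := mul_pos (div_pos (hμ.trans hμs) hμ) (by linarith)
  have hx1 : x < 1 := by nlinarith
  subst htcs
  have hca : c * μ ^ 2 < -(log x + r) := by
    have := mul_lt_mul_of_pos_right hcc (by positivity : 0 < μ ^ 2)
    rw [hcs] at this
    field_simp at this
    linarith
  have hneg : freeBoundaryFun (c * μ ^ 2) (log x) < 0 := by
    have := one_add_mul_freeBoundaryFun_log (a := c * μ ^ 2) hx0 hxr
    nlinarith
  obtain ⟨s, ⟨hts, hs0⟩, hs⟩ :=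
    exists_freeBoundaryFun_eq_zero_mem_Ioo (by positivity) (log_neg hx0 hx1).le hneg
  obtain rfl := huniq s hs
  refine ⟨⟨hts, hs0⟩, by gcongr, ?_⟩
  rw [div_lt_div_iff₀ (by positivity) two_pos]
  linarith

theorem stmt_13 (μ c cstar : ℝ) (hμ : 0 < μ)
    (hcs : cstar = -(1 / μ ^ 2) *
      (Real.log ((Real.sinh μ / μ) * (1 - Real.sqrt (1 - μ ^ 2 / Real.sinh μ ^ 2)))
        + Real.sqrt (1 - μ ^ 2 / Real.sinh μ ^ 2)))
    (hc : 0 < c) (hcc : c < cstar)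
    (tcstar : ℝ)
    (htcs : tcstar = Real.log ((Real.sinh μ / μ) * (1 - Real.sqrt (1 - μ ^ 2 / Real.sinh μ ^ 2))))
    (tc : ℝ)
    (htc : Real.exp (2 * tc) * (tc + c * μ ^ 2 - 1) + tc + c * μ ^ 2 + 1 = 0)
    (huniq : ∀ s : ℝ, Real.exp (2 * s) * (s + c * μ ^ 2 - 1) + s + c * μ ^ 2 + 1 = 0 → s = tc) :
    (tcstar < tc ∧ tc < 0) ∧
    ((tcstar + μ) / (2 * μ) < (tc + μ) / (2 * μ) ∧ (tc + μ) / (2 * μ) < 1 / 2) :=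
  stmt_13_general μ c cstar hμ hcs hc hcc tcstar htcs tc huniq
end

section
/- Fix μ > 0, let t_c ∈ ]-μ, 0[ with cosh(t_c) appearing via α_c = -e^{-μ}/(2μ² cosh t_c), and define, for s ∈ ℝ, F(s) = μ²α_c · 4 sinh²(s/2) · 2e^{μ} cosh(s - μ) + 4 sinh²(s/2). Then F(s) < 0 for all s ∈ ]0, t_c + μ[. -/
/-!
The normalisation of `α_c` makes `μ² α_c · 2e^μ = -1 / cosh t_c`, so
`F(s) = 4 sinh²(s/2) · (1 - cosh(s - μ) / cosh t_c)`. For `0 < s < t_c + μ` the first factor is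
positive, and `|t_c| < |s - μ|` gives `cosh t_c < cosh(s - μ)`, so the second factor is negative.
-/

open Real

lemma sq_mul_neg_exp_div_mul_two_exp {μ : ℝ} (hμ : μ ≠ 0) (c : ℝ) :
    μ ^ 2 * (-exp (-μ) / (2 * μ ^ 2 * cosh c)) * (2 * exp μ) = -(cosh c)⁻¹ := by
  have hexp : exp (-μ) * exp μ = 1 := by rw [← exp_add, neg_add_cancel, exp_zero]
  field_simp [(cosh_pos c).ne']
  linear_combination -hexp

lemma cosh_lt_cosh_sub {μ t s : ℝ} (ht : t ∈ Set.Ioo (-μ) 0) (hs : s ∈ Set.Ioo 0 (t + μ)) :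
    cosh t < cosh (s - μ) := by
  rw [cosh_lt_cosh, abs_of_neg ht.2, abs_of_neg (by linarith [hs.2, ht.2])]
  linarith [hs.2]

theorem stmt_14_general (μ tc α : ℝ)
    (htc : tc ∈ Set.Ioo (-μ) 0)
    (hα : α = -Real.exp (-μ) / (2 * μ ^ 2 * Real.cosh tc))
    (F : ℝ → ℝ)
    (hF : ∀ s, F s = μ ^ 2 * α * (4 * Real.sinh (s / 2) ^ 2) * (2 * Real.exp μ * Real.cosh (s - μ))
      + 4 * Real.sinh (s / 2) ^ 2) :
    ∀ s ∈ Set.Ioo (0 : ℝ) (tc + μ), F s < 0 := by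
  intro s hs
  have hμ : μ ≠ 0 := by linarith [htc.1, htc.2]
  have hF_factor : F s = 4 * sinh (s / 2) ^ 2 * (1 - cosh (s - μ) / cosh tc) := by
    rw [hF, hα, div_eq_mul_inv]
    linear_combination 4 * sinh (s / 2) ^ 2 * cosh (s - μ) * sq_mul_neg_exp_div_mul_two_exp hμ tc
  have hsinh : 0 < 4 * sinh (s / 2) ^ 2 := by
    have : 0 < sinh (s / 2) := sinh_pos_iff.2 (by linarith [hs.1])
    positivity
  have hratio : 1 < cosh (s - μ) / cosh tc :=
    (one_lt_div (cosh_pos tc)).2 (cosh_lt_cosh_sub htc hs)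
  rw [hF_factor]
  exact mul_neg_of_pos_of_neg hsinh (by linarith)

theorem stmt_14 (μ tc α : ℝ) (hμ : 0 < μ)
    (htc : tc ∈ Set.Ioo (-μ) 0)
    (hα : α = -Real.exp (-μ) / (2 * μ ^ 2 * Real.cosh tc))
    (F : ℝ → ℝ)
    (hF : ∀ s, F s = μ ^ 2 * α * (4 * Real.sinh (s / 2) ^ 2) * (2 * Real.exp μ * Real.cosh (s - μ))
      + 4 * Real.sinh (s / 2) ^ 2) :
    ∀ s ∈ Set.Ioo (0 : ℝ) (tc + μ), F s < 0 :=
  stmt_14_general μ tc α htc hα F hF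
end

section
/- Let μ > 0 and α₀ = -e^{-μ}/(2μ²). Then y = 0 is a solution of the equation μ²α₀ e^{4μy} + (1 - 2μ²α₀) e^{2μy} + μ²α₀ - 2μy - 1 = 0, and it is the unique solution in the interval [0, 1/2]. -/
/-!
With `x = 2μy` and `μ²α₀ = -e^{-μ}/2`, the equation reads
`e^x - x - 1 - e^{-μ}/2 · (e^x - 1)² = 0`. Replacing `e^{-μ}` by the larger `e^{-x}` (valid for
`x ≤ μ`, i.e. `y ≤ 1/2`) can only decrease the left side and turns it into `sinh x - x`, which is
positive for `x > 0`.
-/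

open Real

lemma exp_sub_self_sub_one_sub_exp_neg_mul_sq (x : ℝ) :
    exp x - x - 1 - exp (-x) / 2 * (exp x - 1) ^ 2 = sinh x - x := by
  have hinv : exp (-x) * exp x = 1 := by rw [← exp_add, neg_add_cancel, exp_zero]
  rw [sinh_eq]
  linear_combination (1 - exp x / 2) * hinv

lemma exp_sub_self_sub_one_sub_mul_sq_pos {x c : ℝ} (hx : 0 < x) (hc : c ≤ exp (-x)) :
    0 < exp x - x - 1 - c / 2 * (exp x - 1) ^ 2 := by
  have hsinh : 0 < sinh x - x := sub_pos.mpr (self_lt_sinh_iff.mpr hx)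
  rw [← exp_sub_self_sub_one_sub_exp_neg_mul_sq] at hsinh
  nlinarith [mul_le_mul_of_nonneg_right hc (sq_nonneg (exp x - 1))]

theorem stmt_19 (μ : ℝ) (hμ : 0 < μ)
    (α₀ : ℝ) (hα₀ : α₀ = -Real.exp (-μ) / (2 * μ ^ 2))
    (eq : ℝ → ℝ)
    (heq : ∀ y, eq y = μ ^ 2 * α₀ * Real.exp (4 * μ * y) + (1 - 2 * μ ^ 2 * α₀) * Real.exp (2 * μ * y)
      + μ ^ 2 * α₀ - 2 * μ * y - 1) :
    eq 0 = 0 ∧ ∀ y ∈ Set.Icc (0 : ℝ) (1 / 2), eq y = 0 → y = 0 := by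
  refine ⟨by rw [heq]; simp only [mul_zero, exp_zero]; ring, fun y ⟨hy0, hy1⟩ hy => ?_⟩
  have hβ : μ ^ 2 * α₀ = -exp (-μ) / 2 := by rw [hα₀]; field_simp
  have hexp4 : exp (4 * μ * y) = exp (2 * μ * y) ^ 2 := by rw [← exp_nat_mul]; ring_nf
  have hform : eq y = exp (2 * μ * y) - 2 * μ * y - 1 - exp (-μ) / 2 * (exp (2 * μ * y) - 1) ^ 2 := by
    rw [heq, hexp4]
    linear_combination (exp (2 * μ * y) - 1) ^ 2 * hβ
  by_contra hne
  have hx : 0 < 2 * μ * y := by have := lt_of_le_of_ne hy0 (Ne.symm hne); positivity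
  have hc : exp (-μ) ≤ exp (-(2 * μ * y)) := exp_le_exp.mpr (by nlinarith)
  exact (exp_sub_self_sub_one_sub_mul_sq_pos hx hc).ne' (hform ▸ hy)
end
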